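/- arXiv:1708.01678 — 3 statements merged into one kernel-verified Lean document; each statement's English description precedes it below -/
import Mathlib

section
/- Let $\mu$ be a finite measure on $(0,\infty)$ and let $g : (0,\infty) \to \mathbb{R}$ be measurable with $\int_0^\infty e^{-t x_0} |g(t)|\,\mu(dt) < \infty$ for some $x_0 > 0$. Suppose there exists $p > 0$ such that $g(t) \le 0$ for $t \le p$ and $g(t) \ge 0$ for $t \ge p$. Then for all $x \ge x_0$ and all $b \le x$ with $b \ge x_0$, $\int_0^\infty e^{-tx} g(t)\,\mu(dt) \le e^{-(x-b)p} \int_0^\infty e^{-tb} g(t)\,\mu(dt)$. -/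
/-! Write `e^{-tx} g(t) = e^{-(x-b)t} · e^{-tb} g(t)`. Since `t ↦ e^{-(x-b)t}` is antitone and
`e^{-tb} g(t)` is `≤ 0` for `t ≤ p` and `≥ 0` for `t ≥ p`, replacing `e^{-(x-b)t}` by its value at
`t = p` can only increase the integrand, pointwise. -/

open Set MeasureTheory Real

lemma exp_neg_mul_mul_le_of_sign_change {s t p y : ℝ} (hs : 0 ≤ s)
    (hneg : t ≤ p → y ≤ 0) (hpos : p ≤ t → 0 ≤ y) :
    exp (-s * t) * y ≤ exp (-s * p) * y := by
  rcases le_total t p with htp | hpt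
  · exact mul_le_mul_of_nonpos_right (exp_le_exp.2 (by nlinarith)) (hneg htp)
  · exact mul_le_mul_of_nonneg_right (exp_le_exp.2 (by nlinarith)) (hpos hpt)

lemma ae_pos_of_measure_Iic_zero {μ : Measure ℝ} (hsupp : μ (Iic 0) = 0) : ∀ᵐ t ∂μ, 0 < t := by
  filter_upwards [measure_eq_zero_iff_ae_notMem.1 hsupp] with t ht
  simpa using ht

lemma integrable_exp_neg_mul_mul_of_le {μ : Measure ℝ} (hμ : ∀ᵐ t ∂μ, 0 < t)
    {g : ℝ → ℝ} (hg : Measurable g) {x₀ c : ℝ}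
    (hint : Integrable (fun t => exp (-t * x₀) * |g t|) μ) (hc : x₀ ≤ c) :
    Integrable (fun t => exp (-t * c) * g t) μ := by
  refine hint.mono ((measurable_id.neg.mul_const c).exp.mul hg).aestronglyMeasurable ?_
  filter_upwards [hμ] with t ht
  simp only [norm_mul, norm_eq_abs, abs_abs, abs_exp]
  exact mul_le_mul_of_nonneg_right (exp_le_exp.2 (by nlinarith)) (abs_nonneg _)

theorem stmt_1_general (μ : Measure ℝ) (hsupp : μ (Iic 0) = 0)
    (g : ℝ → ℝ) (hg : Measurable g) (x0 : ℝ)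
    (hint : Integrable (fun t => Real.exp (-t * x0) * |g t|) μ)
    (p : ℝ)
    (hneg : ∀ t, 0 < t → t ≤ p → g t ≤ 0)
    (hpos : ∀ t, p ≤ t → 0 ≤ g t) :
    ∀ x, x0 ≤ x → ∀ b, x0 ≤ b → b ≤ x →
      ∫ t, Real.exp (-t * x) * g t ∂μ ≤
        Real.exp (-(x - b) * p) * ∫ t, Real.exp (-t * b) * g t ∂μ := by
  intro x hx b hb hbx
  have hμ := ae_pos_of_measure_Iic_zero hsupp
  rw [← integral_const_mul]
  refine integral_mono_ae (integrable_exp_neg_mul_mul_of_le hμ hg hint hx)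
    ((integrable_exp_neg_mul_mul_of_le hμ hg hint hb).const_mul _) ?_
  filter_upwards [hμ] with t ht
  have hsplit : exp (-t * x) * g t = exp (-(x - b) * t) * (exp (-t * b) * g t) := by
    rw [← mul_assoc, ← exp_add]
    ring_nf
  rw [hsplit]
  exact exp_neg_mul_mul_le_of_sign_change (sub_nonneg.2 hbx)
    (fun htp => mul_nonpos_of_nonneg_of_nonpos (exp_pos _).le (hneg t ht htp))
    (fun hpt => mul_nonneg (exp_pos _).le (hpos t hpt))

theorem stmt_1 (μ : Measure ℝ) [IsFiniteMeasure μ] (hsupp : μ (Iic 0) = 0)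
    (g : ℝ → ℝ) (hg : Measurable g) (x0 : ℝ) (hx0 : 0 < x0)
    (hint : Integrable (fun t => Real.exp (-t * x0) * |g t|) μ)
    (p : ℝ) (hp : 0 < p)
    (hneg : ∀ t, 0 < t → t ≤ p → g t ≤ 0)
    (hpos : ∀ t, p ≤ t → 0 ≤ g t) :
    ∀ x, x0 ≤ x → ∀ b, x0 ≤ b → b ≤ x →
      ∫ t, Real.exp (-t * x) * g t ∂μ ≤
        Real.exp (-(x - b) * p) * ∫ t, Real.exp (-t * b) * g t ∂μ :=
  stmt_1_general μ hsupp g hg x0 hint p hneg hpos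
end

section
/- Let $\Phi > 0$, $r > 0$, and let $W'' : (0,\infty) \to \mathbb{R}$ be continuous with $e^{-\Phi y}|W''(y)|$ integrable. Suppose there exists $\bar{b} \ge 0$ with $W'' < 0$ on $(0,\bar b)$ and $W'' > 0$ on $(\bar b, \infty)$. Define $h(b) := -r\int_b^\infty e^{-\Phi y}W''(y)\,dy$. Then: (i) $h$ is decreasing on $(0,\bar b)$ and increasing on $(\bar b,\infty)$ with $h(b) \to 0$ as $b \to \infty$ and $h(\bar b) < 0$ (assuming $\bar b$ is such that $W''$ is not a.e. zero on $(\bar b,\infty)$); (ii) if $\lim_{b\downarrow 0} h(b) > 0$ then there is a unique $b^* \in (0,\bar b)$ with $h(b^*) = 0$ and $h(b) \ge 0$ iff $b \in (0,b^*]$; (iii) if $\lim_{b \downarrow 0} h(b) \le 0$ then $h(b) \le 0$ for all $b > 0$. -/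
/-!
Multiplying by `-r < 0` turns `h` into the tail integral `T b = ∫_b^∞ g` of
`g = -r e^{-Φ y} W''(y)`, which is positive on `(0, b̄)` and negative on `(b̄, ∞)`.
Since `T a - T b = ∫_a^b g`, the tail strictly decreases on `[0, b̄]` and strictly increases
on `[b̄, ∞)` towards its limit `0`; in particular it is negative on `[b̄, ∞)`. Hence `T` is
nonnegative exactly on an initial segment `(0, b*]`, with `b*` the unique zero in `(0, b̄)`,
given by the intermediate value theorem, when `T 0 > 0`.
-/

open Set MeasureTheory Filter Topology

section TailIntegral

variable {f : ℝ → ℝ} {a b c : ℝ}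

theorem integral_Ioi_lt_integral_Ioi_of_pos (hf : IntegrableOn f (Ioi a)) (hab : a < b)
    (hpos : ∀ y ∈ Ioo a b, 0 < f y) : ∫ y in Ioi b, f y < ∫ y in Ioi a, f y := by
  have hfab : IntervalIntegrable f volume a b :=
    (intervalIntegrable_iff_integrableOn_Ioc_of_le hab.le).2 (hf.mono_set Ioc_subset_Ioi_self)
  have := intervalIntegral.intervalIntegral_pos_of_pos_on hfab hpos hab
  rw [← intervalIntegral.integral_Ioi_sub_Ioi hf hab.le] at this
  linarith

theorem integral_Ioi_lt_integral_Ioi_of_neg (hf : IntegrableOn f (Ioi a)) (hab : a < b)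
    (hneg : ∀ y ∈ Ioo a b, f y < 0) : ∫ y in Ioi a, f y < ∫ y in Ioi b, f y := by
  have := integral_Ioi_lt_integral_Ioi_of_pos (f := fun y => -f y) hf.neg hab
    fun y hy => neg_pos.2 (hneg y hy)
  simpa only [integral_neg, neg_lt_neg_iff] using this

theorem integral_Ioi_neg_of_neg (hf : IntegrableOn f (Ioi a)) (hneg : ∀ y, a < y → f y < 0) :
    ∫ y in Ioi a, f y < 0 :=
  calc ∫ y in Ioi a, f y
      < ∫ y in Ioi (a + 1), f y :=
        integral_Ioi_lt_integral_Ioi_of_neg hf (lt_add_one a) fun y hy => hneg y hy.1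
    _ ≤ 0 := setIntegral_nonpos measurableSet_Ioi fun y hy =>
        (hneg y ((lt_add_one a).trans hy)).le

theorem tendsto_integral_Ioi_atTop (hf : IntegrableOn f (Ioi a)) :
    Tendsto (fun b => ∫ y in Ioi b, f y) atTop (𝓝 0) := by
  have hprim := (intervalIntegral_tendsto_integral_Ioi a hf tendsto_id).const_sub
    (∫ y in Ioi a, f y)
  rw [sub_self] at hprim
  refine hprim.congr' ?_
  filter_upwards [eventually_ge_atTop a] with b hab
  rw [id_eq, ← intervalIntegral.integral_Ioi_sub_Ioi hf hab, sub_sub_cancel]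

theorem continuousOn_integral_Ioi (hf : IntegrableOn f (Ioi a)) (hac : a ≤ c) :
    ContinuousOn (fun b => ∫ y in Ioi b, f y) (Icc a c) := by
  have hfac : IntervalIntegrable f volume a c :=
    (intervalIntegrable_iff_integrableOn_Ioc_of_le hac).2 (hf.mono_set Ioc_subset_Ioi_self)
  have hprim := intervalIntegral.continuousOn_primitive_interval' hfac left_mem_uIcc
  rw [uIcc_of_le hac] at hprim
  refine ((continuousOn_const (c := ∫ y in Ioi a, f y)).sub hprim).congr fun b hb => ?_
  rw [Pi.sub_apply, ← intervalIntegral.integral_Ioi_sub_Ioi hf hb.1, sub_sub_cancel]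

theorem strictAntiOn_integral_Ioi_of_pos (hf : IntegrableOn f (Ioi a))
    (hpos : ∀ y ∈ Ioo a c, 0 < f y) :
    StrictAntiOn (fun b => ∫ y in Ioi b, f y) (Icc a c) := fun _ hx _ hz hxz =>
  integral_Ioi_lt_integral_Ioi_of_pos (hf.mono_set (Ioi_subset_Ioi hx.1)) hxz
    fun y hy => hpos y ⟨hx.1.trans_lt hy.1, hy.2.trans_le hz.2⟩

theorem strictMonoOn_integral_Ioi_of_neg (hf : IntegrableOn f (Ioi a)) (hac : a ≤ c)
    (hneg : ∀ y, c < y → f y < 0) :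
    StrictMonoOn (fun b => ∫ y in Ioi b, f y) (Ici c) := fun _ hx _ _ hxz =>
  integral_Ioi_lt_integral_Ioi_of_neg (hf.mono_set (Ioi_subset_Ioi (hac.trans hx))) hxz
    fun y hy => hneg y (hx.trans_lt hy.1)

end TailIntegral

theorem StrictAntiOn.exists_zero_and_nonneg_iff_le {g : ℝ → ℝ} {a c : ℝ} (hac : a ≤ c)
    (hanti : StrictAntiOn g (Icc a c)) (hcont : ContinuousOn g (Icc a c)) (ha : 0 < g a)
    (hneg : ∀ b, c ≤ b → g b < 0) :
    ∃ bs ∈ Ioo a c, g bs = 0 ∧ ∀ b, a ≤ b → (0 ≤ g b ↔ b ≤ bs) := by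
  obtain ⟨bs, hbs, hbs0⟩ := intermediate_value_Icc' hac hcont ⟨(hneg c le_rfl).le, ha.le⟩
  have hbs_ne_a : bs ≠ a := by rintro rfl; exact ha.ne' hbs0
  have hbs_lt_c : bs < c := hbs.2.lt_of_ne <| by rintro rfl; exact (hneg bs le_rfl).ne hbs0
  refine ⟨bs, ⟨hbs.1.lt_of_ne hbs_ne_a.symm, hbs_lt_c⟩, hbs0, fun b hab => ?_⟩
  rcases le_or_gt c b with hcb | hbc
  · exact iff_of_false (hneg b hcb).not_ge (hbs_lt_c.trans_le hcb).not_ge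
  · have hb : b ∈ Icc a c := ⟨hab, hbc.le⟩
    rw [← hbs0, hanti.le_iff_ge hbs hb]

theorem stmt_7_general (Φ r : ℝ) (hr : 0 < r)
    (W'' : ℝ → ℝ) (hW''c : ContinuousOn W'' (Ioi 0))
    (hint : IntegrableOn (fun y => Real.exp (-Φ * y) * |W'' y|) (Ioi 0))
    (bbar : ℝ) (hbbar : 0 ≤ bbar)
    (hneg : ∀ y, 0 < y → y < bbar → W'' y < 0)
    (hpos : ∀ y, bbar < y → 0 < W'' y) :
    (StrictAntiOn (fun b => -r * ∫ y in Ioi b, Real.exp (-Φ * y) * W'' y) (Ioo 0 bbar) ∧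
     StrictMonoOn (fun b => -r * ∫ y in Ioi b, Real.exp (-Φ * y) * W'' y) (Ici bbar) ∧
     Tendsto (fun b => -r * ∫ y in Ioi b, Real.exp (-Φ * y) * W'' y) atTop (nhds 0) ∧
     -r * ∫ y in Ioi bbar, Real.exp (-Φ * y) * W'' y < 0) ∧
    (0 < -r * ∫ y in Ioi (0:ℝ), Real.exp (-Φ * y) * W'' y →
      ∃ bs, bs ∈ Ioo 0 bbar ∧ (-r * ∫ y in Ioi bs, Real.exp (-Φ * y) * W'' y) = 0 ∧
        (∀ b ∈ Ioo (0:ℝ) bbar, (-r * ∫ y in Ioi b, Real.exp (-Φ * y) * W'' y) = 0 → b = bs) ∧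
        (∀ b > (0:ℝ), (0 ≤ -r * ∫ y in Ioi b, Real.exp (-Φ * y) * W'' y) ↔ b ≤ bs)) ∧
    (-r * ∫ y in Ioi (0:ℝ), Real.exp (-Φ * y) * W'' y ≤ 0 →
      ∀ b > (0:ℝ), -r * ∫ y in Ioi b, Real.exp (-Φ * y) * W'' y ≤ 0) := by
  set g : ℝ → ℝ := fun y => -r * (Real.exp (-Φ * y) * W'' y)
  have hg : IntegrableOn g (Ioi 0) := by
    refine (hint.const_mul r).mono' ?_ (ae_of_all _ fun y => ?_)
    · exact ContinuousOn.aestronglyMeasurable (by fun_prop) measurableSet_Ioi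
    · simp [g, abs_of_pos hr]
  have hg_pos : ∀ y ∈ Ioo 0 bbar, 0 < g y := fun y hy =>
    mul_pos_of_neg_of_neg (neg_neg_of_pos hr)
      (mul_neg_of_pos_of_neg (Real.exp_pos _) (hneg y hy.1 hy.2))
  have hg_neg : ∀ y, bbar < y → g y < 0 := fun y hy =>
    mul_neg_of_neg_of_pos (neg_neg_of_pos hr) (mul_pos (Real.exp_pos _) (hpos y hy))
  simp only [← integral_const_mul]
  have hanti := strictAntiOn_integral_Ioi_of_pos hg hg_pos
  have htail_neg : ∀ b, bbar ≤ b → ∫ y in Ioi b, g y < 0 := fun b hb =>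
    integral_Ioi_neg_of_neg (hg.mono_set (Ioi_subset_Ioi (hbbar.trans hb)))
      fun y hy => hg_neg y (hb.trans_lt hy)
  refine ⟨⟨hanti.mono Ioo_subset_Icc_self, strictMonoOn_integral_Ioi_of_neg hg hbbar hg_neg,
    tendsto_integral_Ioi_atTop hg, htail_neg bbar le_rfl⟩, fun h0 => ?_, fun h0 b hb => ?_⟩
  · obtain ⟨bs, hbs, hbs0, hiff⟩ :=
      hanti.exists_zero_and_nonneg_iff_le hbbar (continuousOn_integral_Ioi hg hbbar) h0 htail_neg
    exact ⟨bs, hbs, hbs0, fun b hb hb0 => hanti.injOn (Ioo_subset_Icc_self hb)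
      (Ioo_subset_Icc_self hbs) (hb0.trans hbs0.symm), fun b hb => hiff b hb.le⟩
  · rcases le_or_gt bbar b with hb' | hb'
    · exact (htail_neg b hb').le
    · exact (hanti ⟨le_rfl, hbbar⟩ ⟨hb.le, hb'.le⟩ hb).le.trans h0

theorem stmt_7 (Φ r : ℝ) (hΦ : 0 < Φ) (hr : 0 < r)
    (W'' : ℝ → ℝ) (hW''c : ContinuousOn W'' (Ioi 0))
    (hint : IntegrableOn (fun y => Real.exp (-Φ * y) * |W'' y|) (Ioi 0))
    (bbar : ℝ) (hbbar : 0 ≤ bbar)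
    (hneg : ∀ y, 0 < y → y < bbar → W'' y < 0)
    (hpos : ∀ y, bbar < y → 0 < W'' y) :
    (StrictAntiOn (fun b => -r * ∫ y in Ioi b, Real.exp (-Φ * y) * W'' y) (Ioo 0 bbar) ∧
     StrictMonoOn (fun b => -r * ∫ y in Ioi b, Real.exp (-Φ * y) * W'' y) (Ici bbar) ∧
     Tendsto (fun b => -r * ∫ y in Ioi b, Real.exp (-Φ * y) * W'' y) atTop (nhds 0) ∧
     -r * ∫ y in Ioi bbar, Real.exp (-Φ * y) * W'' y < 0) ∧
    (0 < -r * ∫ y in Ioi (0:ℝ), Real.exp (-Φ * y) * W'' y →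
      ∃ bs, bs ∈ Ioo 0 bbar ∧ (-r * ∫ y in Ioi bs, Real.exp (-Φ * y) * W'' y) = 0 ∧
        (∀ b ∈ Ioo (0:ℝ) bbar, (-r * ∫ y in Ioi b, Real.exp (-Φ * y) * W'' y) = 0 → b = bs) ∧
        (∀ b > (0:ℝ), (0 ≤ -r * ∫ y in Ioi b, Real.exp (-Φ * y) * W'' y) ↔ b ≤ bs)) ∧
    (-r * ∫ y in Ioi (0:ℝ), Real.exp (-Φ * y) * W'' y ≤ 0 →
      ∀ b > (0:ℝ), -r * ∫ y in Ioi b, Real.exp (-Φ * y) * W'' y ≤ 0) :=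
  stmt_7_general Φ r hr W'' hW''c hint bbar hbbar hneg hpos
end

section
/- Let $\psi(\theta) = c\theta + \int_{(-\infty,0)}(e^{\theta z} - 1)\Pi(dz)$ for $\theta \ge 0$, where $c > 0$ and $\Pi$ is a finite measure on $(-\infty,0)$, and let $\Phi(s)$ be the unique positive root of $\psi(\lambda) = s$ for $s > 0$. Then for fixed $q > 0$, $\Phi(q+r) - \frac{r}{c} \to \frac{q + \Pi(-\infty,0)}{c}$ as $r \to \infty$. -/
open Set MeasureTheory Filter Topology

/-!
Writing `F t = ∫ (1 - exp (t z)) dΠ`, the root equation `ψ (Φ s) = s` reads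
`c Φ s = s + F (Φ s)`. Since `F ≥ 0`, this forces `Φ (q + r) ≥ (q + r) / c → ∞`, and
`Φ (q + r) - r / c = (q + F (Φ (q + r))) / c`. As `Π` lives on `(-∞, 0)`, bounded convergence
gives `F t → Π (-∞, 0)` as `t → ∞`.
-/

lemma one_sub_exp_mul_mem_Icc {t z : ℝ} (ht : 0 ≤ t) (hz : z ≤ 0) :
    1 - Real.exp (t * z) ∈ Icc (0 : ℝ) 1 :=
  ⟨sub_nonneg.mpr (Real.exp_le_one_iff.mpr (mul_nonpos_of_nonneg_of_nonpos ht hz)),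
    sub_le_self _ (Real.exp_pos _).le⟩

section NegativeSupport

variable {μ : Measure ℝ}

lemma integral_one_sub_exp_mul_nonneg (hμ : ∀ᵐ z ∂μ, z < 0) {t : ℝ} (ht : 0 ≤ t) :
    0 ≤ ∫ z, (1 - Real.exp (t * z)) ∂μ :=
  integral_nonneg_of_ae <| hμ.mono fun _ hz ↦ (one_sub_exp_mul_mem_Icc ht hz.le).1

lemma tendsto_integral_one_sub_exp_mul_atTop [IsFiniteMeasure μ] (hμ : ∀ᵐ z ∂μ, z < 0) :
    Tendsto (fun t ↦ ∫ z, (1 - Real.exp (t * z)) ∂μ) atTop (𝓝 (μ.real univ)) := by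
  have hlim : Tendsto (fun t ↦ ∫ z, (1 - Real.exp (t * z)) ∂μ) atTop (𝓝 (∫ _, (1 : ℝ) ∂μ)) := by
    refine tendsto_integral_filter_of_dominated_convergence (fun _ ↦ 1)
      (.of_forall fun t ↦ by fun_prop) ?_ (integrable_const 1) ?_
    · filter_upwards [eventually_ge_atTop 0] with t ht
      filter_upwards [hμ] with z hz
      have := one_sub_exp_mul_mem_Icc ht hz.le
      rw [Real.norm_of_nonneg this.1]
      exact this.2
    · filter_upwards [hμ] with z hz
      simpa using tendsto_const_nhds (x := (1 : ℝ)).sub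
        (Real.tendsto_exp_atBot.comp (tendsto_id.atTop_mul_const_of_neg hz))
  simpa using hlim

end NegativeSupport

lemma tendsto_sub_div_of_mul_eq_add {F x : ℝ → ℝ} {c q L : ℝ} (hc : 0 < c)
    (hF_nonneg : ∀ t, 0 ≤ t → 0 ≤ F t) (hF : Tendsto F atTop (𝓝 L))
    (hx : ∀ᶠ r in atTop, 0 ≤ x r ∧ c * x r = q + r + F (x r)) :
    Tendsto (fun r ↦ x r - r / c) atTop (𝓝 ((q + L) / c)) := by
  have hx_top : Tendsto x atTop atTop := by
    refine tendsto_atTop_mono' atTop ?_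
      ((tendsto_atTop_add_const_left atTop q tendsto_id).atTop_div_const hc)
    filter_upwards [hx] with r ⟨hxr, hxr_eq⟩
    rw [id, div_le_iff₀ hc]
    linarith [hF_nonneg _ hxr]
  refine ((tendsto_const_nhds.add (hF.comp hx_top)).div_const c).congr' ?_
  filter_upwards [hx] with r ⟨_, hxr_eq⟩
  field_simp
  simp only [Function.comp_apply]
  linarith

theorem stmt_13_general (c q : ℝ) (hc : 0 < c)
    (Pi0 : Measure ℝ) [IsFiniteMeasure Pi0] (hsupp : Pi0 (Ici 0) = 0)
    (ψ : ℝ → ℝ)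
    (hψ : ∀ θ : ℝ, 0 ≤ θ → ψ θ = c * θ + ∫ z, (Real.exp (θ * z) - 1) ∂Pi0)
    (Φ : ℝ → ℝ)
    (hΦ : ∀ s > (0:ℝ), 0 < Φ s ∧ ψ (Φ s) = s ∧ ∀ l > (0:ℝ), ψ l = s → l = Φ s) :
    Tendsto (fun r : ℝ => Φ (q + r) - r / c) atTop
      (nhds ((q + (Pi0 (Iio 0)).toReal) / c)) := by
  have hneg : ∀ᵐ z ∂Pi0, z < 0 := (mem_ae_iff (s := Iio 0)).mpr (by rwa [compl_Iio])
  have hmass : (Pi0 (Iio 0)).toReal = Pi0.real univ :=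
    congrArg ENNReal.toReal (measure_congr (ae_eq_univ.mpr (by rwa [compl_Iio])))
  rw [hmass]
  refine tendsto_sub_div_of_mul_eq_add hc (fun _ ↦ integral_one_sub_exp_mul_nonneg hneg)
    (tendsto_integral_one_sub_exp_mul_atTop hneg) ?_
  filter_upwards [eventually_gt_atTop (-q)] with r hr
  obtain ⟨hpos, hroot, -⟩ := hΦ (q + r) (by linarith)
  have hflip : ∫ z, (1 - Real.exp (Φ (q + r) * z)) ∂Pi0
      = -∫ z, (Real.exp (Φ (q + r) * z) - 1) ∂Pi0 := by
    simp only [← integral_neg, neg_sub]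
  rw [hψ _ hpos.le] at hroot
  exact ⟨hpos.le, by linarith⟩

theorem stmt_13 (c q : ℝ) (hc : 0 < c) (hq : 0 < q)
    (Pi0 : Measure ℝ) [IsFiniteMeasure Pi0] (hsupp : Pi0 (Ici 0) = 0)
    (ψ : ℝ → ℝ)
    (hψ : ∀ θ : ℝ, 0 ≤ θ → ψ θ = c * θ + ∫ z, (Real.exp (θ * z) - 1) ∂Pi0)
    (Φ : ℝ → ℝ)
    (hΦ : ∀ s > (0:ℝ), 0 < Φ s ∧ ψ (Φ s) = s ∧ ∀ l > (0:ℝ), ψ l = s → l = Φ s) :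
    Tendsto (fun r : ℝ => Φ (q + r) - r / c) atTop
      (nhds ((q + (Pi0 (Iio 0)).toReal) / c)) :=
  stmt_13_general c q hc Pi0 hsupp ψ hψ Φ hΦ
end
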